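/- arXiv:1512.04297 — 2 statements merged into one kernel-verified Lean document; each statement's English description precedes it below -/
import Mathlib

section
/- Let q be a prime power and let k, n, d be positive integers with k ≤ n, d even, and d ≤ 2·min(k, n−k). Then there exists a set C of k-dimensional subspaces of 𝔽_q^n such that any two distinct members U, V of C satisfy d_S(U,V) ≥ d, and |C| = q^{max(k,n−k)·(min(k,n−k) − d/2 + 1)}. -/
/-- The subspace distance `d_S(U,V) = dim(U + V) − dim(U ∩ V)`. -/
noncomputable def subspaceDist (F : Type) [Field F] {n : ℕ} (U V : Submodule F (Fin n → F)) : ℕ :=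
  Module.finrank F ↥(U ⊔ V) - Module.finrank F ↥(U ⊓ V)

/-!
The graph of a linear map `φ : 𝔽_q^k → 𝔽_q^(n-k)` is a `k`-dimensional subspace of `𝔽_q^n`, and
`d_S(graph φ, graph ψ) = 2 · rank (φ - ψ)`. So it suffices to find `q^(max · (min - δ + 1))` maps
with pairwise rank distance at least `δ = d / 2`. These form a Gabidulin code: over `𝔽_(q^m)`,
`m = max`, the `q`-linearized polynomials `∑_{i ≤ min - δ} c_i x^(q^i)` are `𝔽_q`-linear maps whose
kernels have dimension at most `min - δ`, because a nonzero one has at most `q^(min - δ)` roots;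
restricted to a `min`-dimensional subspace they have rank at least `δ`. Transposing handles
`k > n - k`.
-/

open Polynomial Module LinearMap

theorem FiniteField.exists_finrank_eq (F : Type*) [Field F] [Finite F] {m : ℕ} (hm : m ≠ 0) :
    ∃ (E : Type) (_ : Field E) (_ : Algebra F E) (_ : Finite E), finrank F E = m := by
  obtain ⟨p, _⟩ := CharP.exists F
  have hp : Fact p.Prime := ⟨CharP.char_is_prime F p⟩
  let := ZMod.algebra F p
  have := Fintype.ofFinite F
  set a := finrank (ZMod p) F
  have ha : a ≠ 0 := Module.finrank_pos.ne'
  obtain ⟨f⟩ := FiniteField.nonempty_algHom_of_finrank_dvd (F := ZMod p) (K := F)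
    (L := GaloisField p (a * m)) ⟨m, GaloisField.finrank p (mul_ne_zero ha hm)⟩
  let := f.toRingHom.toAlgebra
  refine ⟨_, inferInstance, this, inferInstance, ?_⟩
  have := Fintype.ofFinite (GaloisField p (a * m))
  have hcard := Module.card_eq_pow_finrank (K := F) (V := GaloisField p (a * m))
  rw [← FiniteField.pow_finrank_eq_card p F, ← FiniteField.pow_finrank_eq_card p,
    GaloisField.finrank p (mul_ne_zero ha hm), ← pow_mul] at hcard
  exact (mul_left_cancel₀ ha (Nat.pow_right_injective hp.out.two_le hcard)).symm

noncomputable def linearizedPoly {R : Type*} [Semiring R] (q : ℕ) {s : ℕ} (c : Fin s → R) : R[X] :=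
  ∑ i : Fin s, monomial (q ^ (i : ℕ)) (c i)

section LinearizedPoly

variable {R : Type*} [Semiring R] {q s : ℕ}

theorem coeff_linearizedPoly_pow (hq : 2 ≤ q) (c : Fin s → R) (i : Fin s) :
    (linearizedPoly q c).coeff (q ^ (i : ℕ)) = c i := by
  rw [linearizedPoly, finsetSum_coeff, Finset.sum_eq_single i]
  · exact coeff_monomial_same _ _
  · exact fun j _ hji => coeff_monomial_of_ne _ fun h =>
      hji (Fin.ext (Nat.pow_right_injective hq h.symm))
  · simp

theorem linearizedPoly_ne_zero (hq : 2 ≤ q) {c : Fin s → R} (hc : c ≠ 0) :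
    linearizedPoly q c ≠ 0 := by
  obtain ⟨i, hi⟩ := Function.ne_iff.mp hc
  exact fun h => hi (by rw [← coeff_linearizedPoly_pow hq c i, h, coeff_zero, Pi.zero_apply])

theorem natDegree_linearizedPoly_le (hq : 0 < q) (c : Fin s → R) :
    (linearizedPoly q c).natDegree ≤ q ^ (s - 1) :=
  natDegree_sum_le_of_forall_le _ _ fun i _ =>
    (natDegree_monomial_le _).trans (Nat.pow_le_pow_right hq (by omega))

theorem eval_linearizedPoly {R : Type*} [CommSemiring R] (c : Fin s → R) (x : R) :
    (linearizedPoly q c).eval x = ∑ i, c i * x ^ q ^ (i : ℕ) := by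
  simp [linearizedPoly, eval_finsetSum]

end LinearizedPoly

theorem card_pow_finrank_le_natDegree {F E : Type*} [Field F] [Fintype F] [Field E] [Algebra F E]
    [Finite E] (W : Submodule F E) {P : E[X]} (hP : P ≠ 0) (hW : ∀ x ∈ W, P.IsRoot x) :
    Fintype.card F ^ finrank F W ≤ P.natDegree := by
  rw [← Nat.card_eq_fintype_card, ← Module.natCard_eq_pow_finrank, ← SetLike.coe_sort_coe,
    Nat.card_coe_set_eq, Set.ncard_eq_toFinset_card _ (Set.toFinite _)]
  refine card_le_degree_of_subset_roots fun x hx => (mem_roots hP).mpr (hW x ?_)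
  simpa using hx

section Gabidulin

variable (F : Type*) {E : Type*} [Field F] [Fintype F] [Field E] [Algebra F E]

noncomputable def linearizedMap (s : ℕ) : (Fin s → E) →+ (E →ₗ[F] E) where
  toFun c := ∑ i, c i • (FiniteField.frobeniusAlgHom F E).toLinearMap ^ (i : ℕ)
  map_zero' := by simp
  map_add' c c' := by simp [add_smul, Finset.sum_add_distrib]

theorem linearizedMap_apply {s : ℕ} (c : Fin s → E) (x : E) :
    linearizedMap F s c x = (linearizedPoly (Fintype.card F) c).eval x := by
  simp [linearizedMap, eval_linearizedPoly, Module.End.pow_apply, FiniteField.coe_frobeniusAlgHom,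
    pow_iterate]

theorem finrank_ker_linearizedMap_le [Finite E] {s : ℕ} {c : Fin s → E} (hc : c ≠ 0) :
    finrank F (ker (linearizedMap F s c)) ≤ s - 1 := by
  have hq : 2 ≤ Fintype.card F := Fintype.one_lt_card
  refine (Nat.pow_le_pow_iff_right hq).mp ?_
  refine (card_pow_finrank_le_natDegree _ (linearizedPoly_ne_zero hq hc) fun x hx => ?_).trans
    (natDegree_linearizedPoly_le (by omega) c)
  rw [IsRoot, ← linearizedMap_apply]
  exact hx

end Gabidulin

section RankDistance

variable {F : Type*} [Field F] {V W V' W' : Type*} [AddCommGroup V] [Module F V]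
  [AddCommGroup W] [Module F W] [AddCommGroup V'] [Module F V'] [AddCommGroup W'] [Module F W']

def HasMinRankDist (S : Finset (V →ₗ[F] W)) (δ : ℕ) : Prop :=
  ∀ φ ∈ S, ∀ ψ ∈ S, φ ≠ ψ → δ ≤ finrank F (range (φ - ψ))

theorem AddMonoidHom.injective_of_finrank_range_pos {A : Type*} [AddGroup A]
    (f : A →+ (V →ₗ[F] W)) (h : ∀ a ≠ 0, 0 < finrank F (LinearMap.range (f a))) :
    Function.Injective f :=
  (injective_iff_map_eq_zero f).mpr fun a ha => by_contra fun hne =>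
    (h a hne).ne' (by rw [ha, LinearMap.range_zero, finrank_bot])

theorem hasMinRankDist_image [DecidableEq (V →ₗ[F] W)] {A : Type*} [AddGroup A]
    (f : A →+ (V →ₗ[F] W)) {s : Finset A} {δ : ℕ}
    (h : ∀ a ∈ s, ∀ b ∈ s, a ≠ b → δ ≤ finrank F (range (f (a - b)))) :
    HasMinRankDist (s.image f) δ := by
  intro _ hφ _ hψ hne
  obtain ⟨a, ha, rfl⟩ := Finset.mem_image.mp hφ
  obtain ⟨b, hb, rfl⟩ := Finset.mem_image.mp hψ
  rw [← map_sub]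
  exact h a ha b hb (ne_of_apply_ne f hne)

theorem HasMinRankDist.exists_of_finrank_range_eq [FiniteDimensional F W]
    (ρ : (V →ₗ[F] W) →+ (V' →ₗ[F] W')) (hρ : ∀ φ, finrank F (range (ρ φ)) = finrank F (range φ))
    {S : Finset (V →ₗ[F] W)} {δ : ℕ} (hS : HasMinRankDist S δ) :
    ∃ S' : Finset (V' →ₗ[F] W'), HasMinRankDist S' δ ∧ S'.card = S.card := by
  classical
  have hρ_inj : Function.Injective ρ := ρ.injective_of_finrank_range_pos fun φ hφ => by
    rw [hρ, Nat.pos_iff_ne_zero, Ne, Submodule.finrank_eq_zero, range_eq_bot]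
    exact hφ
  refine ⟨S.image ρ, hasMinRankDist_image ρ fun φ hφ ψ hψ hne => ?_,
    Finset.card_image_of_injective S hρ_inj⟩
  rw [hρ]
  exact hS φ hφ ψ hψ hne

theorem finrank_range_arrowCongr (e₁ : V ≃ₗ[F] V') (e₂ : W ≃ₗ[F] W') (φ : V →ₗ[F] W) :
    finrank F (range (e₁.arrowCongr e₂ φ)) = finrank F (range φ) := by
  have : e₁.arrowCongr e₂ φ = e₂.toLinearMap ∘ₗ φ ∘ₗ e₁.symm.toLinearMap := by
    ext; simp
  rw [this, range_comp, range_comp_of_range_eq_top _ (LinearEquiv.range _),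
    LinearEquiv.finrank_map_eq]

theorem finrank_ker_comp_le_of_injective [FiniteDimensional F W] (g : W →ₗ[F] W')
    {ι : V →ₗ[F] W} (hι : Function.Injective ι) :
    finrank F (ker (g ∘ₗ ι)) ≤ finrank F (ker g) := by
  rw [(Submodule.equivMapOfInjective ι hι _).finrank_eq]
  exact Submodule.finrank_mono (by rw [ker_comp]; exact Submodule.map_comap_le _ _)

end RankDistance

section MRD

variable (F : Type*) [Field F] [Fintype F] (V W : Type*) [AddCommGroup V] [Module F V]
  [FiniteDimensional F V] [AddCommGroup W] [Module F W] [FiniteDimensional F W]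

theorem exists_hasMinRankDist_into_extension {E : Type*} [Field E] [Algebra F E] [Finite E]
    (hVE : finrank F V ≤ finrank F E) {δ : ℕ} (hδ : 0 < δ) (hδV : δ ≤ finrank F V) :
    ∃ S : Finset (V →ₗ[F] E), HasMinRankDist S δ ∧
      S.card = Fintype.card F ^ (finrank F E * (finrank F V - δ + 1)) := by
  classical
  have := Fintype.ofFinite E
  have : FiniteDimensional F E := Module.Finite.of_finite
  obtain ⟨ι, hι⟩ := finrank_le_iff_exists_linearMap.mp hVE
  set s := finrank F V - δ + 1
  let code : (Fin s → E) →+ (V →ₗ[F] E) := (lcomp F E ι).toAddMonoidHom.comp (linearizedMap F s)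
  have hrank : ∀ c ≠ 0, δ ≤ finrank F (range (code c)) := fun c hc => by
    have hdim := finrank_range_add_finrank_ker (code c)
    have hker := finrank_ker_comp_le_of_injective (linearizedMap F s c) hι
    have := finrank_ker_linearizedMap_le F hc
    rw [show code c = linearizedMap F s c ∘ₗ ι from rfl] at hdim ⊢
    omega
  refine ⟨Finset.univ.image code,
    hasMinRankDist_image code fun a _ b _ hab => hrank _ (sub_ne_zero.mpr hab), ?_⟩
  rw [Finset.card_image_of_injective _
      (code.injective_of_finrank_range_pos fun c hc => hδ.trans_le (hrank c hc)),
    Finset.card_univ, Fintype.card_fun, Fintype.card_fin, Module.card_eq_pow_finrank (K := F),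
    pow_mul]

variable {V W}

theorem exists_hasMinRankDist_of_finrank_le (hVW : finrank F V ≤ finrank F W) {δ : ℕ}
    (hδ : 0 < δ) (hδV : δ ≤ finrank F V) :
    ∃ S : Finset (V →ₗ[F] W), HasMinRankDist S δ ∧
      S.card = Fintype.card F ^ (finrank F W * (finrank F V - δ + 1)) := by
  obtain ⟨E, _, _, _, hE⟩ := FiniteField.exists_finrank_eq F (m := finrank F W) (by omega)
  have : FiniteDimensional F E := Module.Finite.of_finite
  obtain ⟨S, hS, hcard⟩ := exists_hasMinRankDist_into_extension F V (hE ▸ hVW) hδ hδV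
  obtain ⟨S', hS', hcard'⟩ := hS.exists_of_finrank_range_eq
    ((LinearEquiv.refl F V).arrowCongr (LinearEquiv.ofFinrankEq E W hE)).toAddMonoidHom
    (finrank_range_arrowCongr _ _)
  exact ⟨S', hS', by rw [hcard', hcard, hE]⟩

theorem exists_hasMinRankDist_card_eq_pow {δ : ℕ} (hδ : 0 < δ) (hδV : δ ≤ finrank F V)
    (hδW : δ ≤ finrank F W) :
    ∃ S : Finset (V →ₗ[F] W), HasMinRankDist S δ ∧ S.card = Fintype.card F ^
      (max (finrank F V) (finrank F W) * (min (finrank F V) (finrank F W) - δ + 1)) := by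
  rcases le_total (finrank F V) (finrank F W) with hVW | hWV
  · rw [max_eq_right hVW, min_eq_left hVW]
    exact exists_hasMinRankDist_of_finrank_le F hVW hδ hδV
  · rw [max_eq_left hWV, min_eq_right hWV]
    obtain ⟨S, hS, hcard⟩ := exists_hasMinRankDist_of_finrank_le F hWV hδ hδW
    let eV := LinearEquiv.ofFinrankEq (Dual F V) V Subspace.dual_finrank_eq
    let eW := LinearEquiv.ofFinrankEq (Dual F W) W Subspace.dual_finrank_eq
    obtain ⟨S', hS', hcard'⟩ := hS.exists_of_finrank_range_eq
      ((eV.arrowCongr eW).toAddMonoidHom.comp Dual.transpose.toAddMonoidHom) fun φ => by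
        show finrank F (range (eV.arrowCongr eW (Dual.transpose φ))) = _
        rw [finrank_range_arrowCongr]
        exact finrank_range_dualMap_eq_finrank_range φ
    exact ⟨S', hS', hcard'.trans hcard⟩

end MRD

section Graph

variable {F : Type*} [Field F] {V W : Type*} [AddCommGroup V] [Module F V] [AddCommGroup W]
  [Module F W]

theorem LinearMap.graph_injective :
    Function.Injective (graph : (V →ₗ[F] W) → Submodule F (V × W)) := fun φ ψ h =>
  LinearMap.ext fun x => (mem_graph_iff ψ (x, φ x)).mp (h ▸ (mem_graph_iff φ _).mpr rfl)

theorem LinearMap.finrank_graph (φ : V →ₗ[F] W) : finrank F φ.graph = finrank F V := by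
  rw [graph_eq_range_prod, finrank_range_of_inj fun x y h => congrArg Prod.fst h]

theorem LinearMap.graph_inf_graph (φ ψ : V →ₗ[F] W) :
    φ.graph ⊓ ψ.graph = (ker (φ - ψ)).map (LinearMap.id.prod φ) := by
  ext ⟨x, y⟩
  simp only [Submodule.mem_inf, mem_graph_iff, Submodule.mem_map, mem_ker, sub_apply, sub_eq_zero]
  constructor
  · rintro ⟨rfl, hψ⟩
    exact ⟨x, hψ, rfl⟩
  · rintro ⟨x', hx', hx⟩
    obtain ⟨rfl, rfl⟩ : x' = x ∧ φ x' = y := Prod.ext_iff.mp hx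
    exact ⟨rfl, hx'⟩

theorem LinearMap.finrank_graph_sup_sub_finrank_graph_inf [FiniteDimensional F V]
    [FiniteDimensional F W] (φ ψ : V →ₗ[F] W) :
    finrank F ↥(φ.graph ⊔ ψ.graph) - finrank F ↥(φ.graph ⊓ ψ.graph) =
      2 * finrank F (range (φ - ψ)) := by
  have hinf : finrank F ↥(φ.graph ⊓ ψ.graph) = finrank F (ker (φ - ψ)) := by
    rw [graph_inf_graph]
    exact ((ker (φ - ψ)).equivMapOfInjective _ fun x y h => congrArg Prod.fst h).finrank_eq.symm
  have := Submodule.finrank_sup_add_finrank_inf_eq φ.graph ψ.graph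
  have := finrank_range_add_finrank_ker (φ - ψ)
  rw [finrank_graph, finrank_graph] at *
  omega

end Graph

theorem subspaceDist_map_linearEquiv {F : Type} {M : Type*} [Field F] [AddCommGroup M]
    [Module F M] {n : ℕ} (e : M ≃ₗ[F] (Fin n → F)) (U U' : Submodule F M) :
    subspaceDist F (U.map e.toLinearMap) (U'.map e.toLinearMap) =
      finrank F ↥(U ⊔ U') - finrank F ↥(U ⊓ U') := by
  rw [subspaceDist, ← Submodule.map_sup, ← Submodule.map_inf _ e.injective,
    LinearEquiv.finrank_map_eq, LinearEquiv.finrank_map_eq]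

theorem HasMinRankDist.exists_lift {F : Type} {V W : Type*} [Field F] [AddCommGroup V]
    [Module F V] [FiniteDimensional F V] [AddCommGroup W] [Module F W] [FiniteDimensional F W]
    {n : ℕ} (e : (V × W) ≃ₗ[F] (Fin n → F)) {S : Finset (V →ₗ[F] W)} {δ : ℕ}
    (hS : HasMinRankDist S δ) :
    ∃ C : Finset (Submodule F (Fin n → F)), (∀ U ∈ C, finrank F U = finrank F V) ∧
      (∀ U ∈ C, ∀ U' ∈ C, U ≠ U' → 2 * δ ≤ subspaceDist F U U') ∧ C.card = S.card := by
  classical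
  refine ⟨S.image fun φ => φ.graph.map e.toLinearMap, ?_, ?_,
    Finset.card_image_of_injective _
      ((Submodule.map_injective_of_injective e.injective).comp graph_injective)⟩
  · intro U hU
    obtain ⟨φ, -, rfl⟩ := Finset.mem_image.mp hU
    rw [LinearEquiv.finrank_map_eq, finrank_graph]
  · intro U hU U' hU' hne
    obtain ⟨φ, hφ, rfl⟩ := Finset.mem_image.mp hU
    obtain ⟨ψ, hψ, rfl⟩ := Finset.mem_image.mp hU'
    rw [subspaceDist_map_linearEquiv, finrank_graph_sup_sub_finrank_graph_inf]
    exact Nat.mul_le_mul_left 2 (hS φ hφ ψ hψ fun h => hne (h ▸ rfl))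

theorem lifted_MRD_exists_general (F : Type) [Field F] [Fintype F]
    (q k n d : ℕ) (hq : Fintype.card F = q)
    (hd : 0 < d) (hkn : k ≤ n)
    (hdeven : Even d) (hdle : d ≤ 2 * min k (n - k)) :
    ∃ C : Finset (Submodule F (Fin n → F)),
      (∀ U ∈ C, Module.finrank F U = k) ∧
      (∀ U ∈ C, ∀ V ∈ C, U ≠ V → d ≤ subspaceDist F U V) ∧
      C.card = q ^ (max k (n - k) * (min k (n - k) - d / 2 + 1)) := by
  obtain ⟨δ, rfl⟩ := hdeven
  obtain ⟨S, hS, hScard⟩ := exists_hasMinRankDist_card_eq_pow F (V := Fin k → F)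
    (W := Fin (n - k) → F) (δ := δ) (by omega) (by rw [finrank_fin_fun]; omega)
    (by rw [finrank_fin_fun]; omega)
  have hdim : finrank F ((Fin k → F) × (Fin (n - k) → F)) = finrank F (Fin n → F) := by
    simp only [finrank_prod, finrank_fin_fun]
    omega
  obtain ⟨C, hCdim, hCdist, hCcard⟩ := hS.exists_lift (LinearEquiv.ofFinrankEq _ _ hdim)
  refine ⟨C, fun U hU => (hCdim U hU).trans (finrank_fin_fun F), fun U hU V hV hUV =>
    (two_mul δ).symm ▸ hCdist U hU V hV hUV, ?_⟩
  rw [hCcard, hScard, ← hq, finrank_fin_fun, finrank_fin_fun, show (δ + δ) / 2 = δ by omega]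

/-- Existence of lifted MRD codes: for `k ≤ n`, `d` even with
`d ≤ 2·min(k, n−k)`, there is a constant dimension code of dimension `k` in
`𝔽_q^n` with minimum subspace distance at least `d` and cardinality
`q^(max(k,n−k)·(min(k,n−k) − d/2 + 1))`. -/
theorem lifted_MRD_exists (F : Type) [Field F] [Fintype F]
    (q k n d : ℕ) (hq : Fintype.card F = q)
    (hk : 0 < k) (hd : 0 < d) (hn : 0 < n) (hkn : k ≤ n)
    (hdeven : Even d) (hdle : d ≤ 2 * min k (n - k)) :
    ∃ C : Finset (Submodule F (Fin n → F)),
      (∀ U ∈ C, Module.finrank F U = k) ∧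
      (∀ U ∈ C, ∀ V ∈ C, U ≠ V → d ≤ subspaceDist F U V) ∧
      C.card = q ^ (max k (n - k) * (min k (n - k) - d / 2 + 1)) :=
  lifted_MRD_exists_general F q k n d hq hd hkn hdeven hdle
end

section
/- Let q be a prime power and let P be a vector space partition of 𝔽_q^n that contains members of at least two distinct dimensions. Let d₁ be the smallest dimension occurring among the members of P, let n₁ be the number of members of P of dimension d₁, and let d₂ be the second-smallest dimension occurring among the members of P. Then: (i) if q^{d₂−d₁} does not divide n₁ and d₂ < 2d₁, then n₁ ≥ q^{d₁} + 1; (ii) if q^{d₂−d₁} does not divide n₁ and d₂ ≥ 2d₁, then either d₁ divides d₂ and n₁ = (q^{d₂} − 1)/(q^{d₁} − 1), or n₁ > 2q^{d₂−d₁}; (iii) if q^{d₂−d₁} divides n₁ and d₂ < 2d₁, then n₁ ≥ q^{d₂} − q^{d₁} + q^{d₂−d₁}; (iv) if q^{d₂−d₁} divides n₁ and d₂ ≥ 2d₁, then n₁ ≥ q^{d₂}. -/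
/-!
For a linear functional `φ` on `V = 𝔽_q^n` let `a(φ)` be the number of tail members contained in
`ker φ`, and write `Q = q^d₁`, `θ = q^(d₂-d₁)`. Double counting over all `φ`, using that tail
members meet pairwise in `0`, gives
`∑ 1 = q^n`, `∑ a = n₁ q^(n-d₁)` and `∑ a² = n₁ q^(n-d₁) + n₁(n₁-1) q^(n-2d₁)`.
Counting the vectors off a hyperplane `ker φ` through the partition gives
`∑_{U ⊄ ker φ} q^(dim U - 1) = q^(n-1)`; since every other member has dimension at least `d₂`,
this forces `θ ∣ n₁ - a(φ)`. Each bound then comes from summing a pointwise inequality over `φ`: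
`a ≥ 1` when `θ ∤ n₁` (case i), `a (a - θ) ≥ 0` when `θ ∣ n₁` (cases iii, iv), and
`(n₁ - a)(n₁ - a - θ) = 0` when `n₁ < 2θ` (case ii), which yields `n₁ (Q - 1) = q^d₂ - 1`.
-/

open Module Finset

section Partition

variable {F V : Type*} [Field F] [AddCommGroup V] [Module F V] {P : Finset (Submodule F V)}

theorem inf_eq_bot_of_existsUnique_mem (hP : ∀ v : V, v ≠ 0 → ∃! U, U ∈ P ∧ v ∈ U)
    {U U' : Submodule F V} (hU : U ∈ P) (hU' : U' ∈ P) (hne : U ≠ U') : U ⊓ U' = ⊥ := by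
  refine (Submodule.eq_bot_iff _).2 fun v hv => by_contra fun hv0 => hne ?_
  obtain ⟨_, _, huniq⟩ := hP v hv0
  exact (huniq U ⟨hU, hv.1⟩).trans (huniq U' ⟨hU', hv.2⟩).symm

theorem finrank_inf_ker_add_one [FiniteDimensional F V] {φ : Module.Dual F V} {U : Submodule F V}
    (hU : ¬U ≤ LinearMap.ker φ) :
    finrank F ↥(U ⊓ LinearMap.ker φ) + 1 = finrank F U := by
  have hφ : φ ≠ 0 := by rintro rfl; exact hU (by simp)
  have hker := φ.finrank_ker_add_one_of_ne_zero hφ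
  have hlt : finrank F ↥(LinearMap.ker φ) < finrank F ↥(U ⊔ LinearMap.ker φ) :=
    Submodule.finrank_lt_finrank_of_lt (left_lt_sup.2 hU |>.trans_eq (sup_comm _ _))
  have := Submodule.finrank_le (U ⊔ LinearMap.ker φ)
  have := Submodule.finrank_sup_add_finrank_inf_eq U (LinearMap.ker φ)
  omega

variable [Fintype F] [Fintype V]

open scoped Classical in
theorem card_filter_mem_ne_zero (W : Submodule F V) :
    #{v | v ∈ W ∧ v ≠ 0} = Fintype.card F ^ finrank F W - 1 := by
  rw [← filter_filter, filter_ne', card_erase_of_mem (by simp), ← Fintype.card_subtype,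
    ← card_eq_pow_finrank]

theorem sum_pow_finrank_inf_sub_one (hP : ∀ v : V, v ≠ 0 → ∃! U, U ∈ P ∧ v ∈ U)
    (W : Submodule F V) :
    ∑ U ∈ P, (Fintype.card F ^ finrank F ↥(U ⊓ W) - 1) = Fintype.card F ^ finrank F W - 1 := by
  classical
  simp only [← card_filter_mem_ne_zero]
  rw [← card_biUnion]
  · congr 1
    ext v
    simp only [mem_biUnion, mem_filter, mem_univ, true_and, Submodule.mem_inf]
    refine ⟨fun ⟨_, _, ⟨_, hvW⟩, hv0⟩ => ⟨hvW, hv0⟩, fun ⟨hvW, hv0⟩ => ?_⟩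
    obtain ⟨U, ⟨hU, hvU⟩, _⟩ := hP v hv0
    exact ⟨U, hU, ⟨hvU, hvW⟩, hv0⟩
  · intro U hU U' hU' hne
    refine disjoint_left.2 fun v hv hv' => ?_
    simp only [mem_filter, mem_univ, true_and, Submodule.mem_inf] at hv hv'
    exact hv.2 ((Submodule.eq_bot_iff _).1 (inf_eq_bot_of_existsUnique_mem hP hU hU' hne) v
      ⟨hv.1.1, hv'.1.1⟩)

open scoped Classical in
theorem sum_pow_finrank_sub_one_of_not_le_ker (hP : ∀ v : V, v ≠ 0 → ∃! U, U ∈ P ∧ v ∈ U)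
    {φ : Module.Dual F V} (hφ : φ ≠ 0) :
    ∑ U ∈ P with ¬U ≤ LinearMap.ker φ, Fintype.card F ^ (finrank F U - 1) =
      Fintype.card F ^ (finrank F V - 1) := by
  set q := Fintype.card F
  have hq : 0 < q - 1 := Nat.sub_pos_of_lt Fintype.one_lt_card
  have pow_succ_sub_one (k : ℕ) : q ^ (k + 1) - 1 = (q ^ k - 1) + (q - 1) * q ^ k := by
    have := Nat.one_le_pow k q (by omega)
    rw [Nat.sub_mul, one_mul, pow_succ, mul_comm]
    have := Nat.le_mul_of_pos_left (q ^ k) (show 0 < q by omega)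
    omega
  have hsplit (U : Submodule F V) : q ^ finrank F U - 1 = (q ^ finrank F ↥(U ⊓ LinearMap.ker φ) - 1)
      + if U ≤ LinearMap.ker φ then 0 else (q - 1) * q ^ (finrank F U - 1) := by
    split_ifs with hU
    · rw [inf_eq_left.2 hU, add_zero]
    · rw [← finrank_inf_ker_add_one hU, pow_succ_sub_one, Nat.add_sub_cancel]
  have hsum : ∑ U ∈ P, (q ^ finrank F U - 1) = q ^ finrank F V - 1 := by
    convert sum_pow_finrank_inf_sub_one hP ⊤ using 4
    · rw [inf_top_eq]
    · rw [finrank_top]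
  rw [sum_congr rfl fun U _ => hsplit U, sum_add_distrib, sum_pow_finrank_inf_sub_one hP, sum_ite,
    sum_const_zero, zero_add, ← mul_sum, ← φ.finrank_ker_add_one_of_ne_zero hφ,
    pow_succ_sub_one] at hsum
  rw [← φ.finrank_ker_add_one_of_ne_zero hφ, Nat.add_sub_cancel]
  exact Nat.eq_of_mul_eq_mul_left hq (Nat.add_left_cancel hsum)

open scoped Classical in
theorem pow_dvd_card_filter_not_le_ker (hP : ∀ v : V, v ≠ 0 → ∃! U, U ∈ P ∧ v ∈ U)
    {d₁ d₂ : ℕ} (hd₁ : 0 < d₁) (hd : d₁ ≤ d₂) (hd₂ : d₂ ≤ finrank F V)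
    (hdim : ∀ U ∈ P, finrank F U = d₁ ∨ d₂ ≤ finrank F U) (φ : Module.Dual F V) :
    Fintype.card F ^ (d₂ - d₁) ∣
      #(P.filter fun U : Submodule F V => finrank F U = d₁ ∧ ¬U ≤ LinearMap.ker φ) := by
  rcases eq_or_ne φ 0 with rfl | hφ
  · simp
  have hsum := sum_pow_finrank_sub_one_of_not_le_ker hP hφ
  rw [← sum_filter_add_sum_filter_not _ (fun U : Submodule F V => finrank F U = d₁),
    sum_congr rfl fun U hU => by rw [(mem_filter.1 hU).2], sum_const, smul_eq_mul] at hsum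
  have hq : 0 < Fintype.card F := Fintype.card_pos
  generalize Fintype.card F = q at hsum hq ⊢
  have htail : q ^ (d₂ - d₁) * q ^ (d₁ - 1) ∣
      #((P.filter fun U => ¬U ≤ LinearMap.ker φ).filter fun U : Submodule F V => finrank F U = d₁) *
        q ^ (d₁ - 1) := by
    rw [← pow_add, show d₂ - d₁ + (d₁ - 1) = d₂ - 1 by omega]
    refine (Nat.dvd_add_left ?_).1 (by rw [hsum]; exact pow_dvd_pow q (by omega))
    refine dvd_sum fun U hU => pow_dvd_pow q ?_
    simp only [mem_filter] at hU
    have := (hdim U hU.1.1).resolve_left hU.2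
    omega
  simpa only [filter_filter, and_comm] using Nat.dvd_of_mul_dvd_mul_right (by positivity) htail

end Partition

section Hyperplanes

-- Mathlib has no `Fintype` instance on the dual space; only cardinalities occur, so any will do.
variable {F V : Type*} [Field F] [Fintype F] [AddCommGroup V] [Module F V] [Fintype V]
  [Fintype (Module.Dual F V)]

open scoped Classical in
theorem card_filter_le_ker (X : Submodule F V) :
    #{φ : Module.Dual F V | X ≤ LinearMap.ker φ} = Fintype.card F ^ (finrank F V - finrank F X) := by
  have hmem (φ : Module.Dual F V) : X ≤ LinearMap.ker φ ↔ φ ∈ X.dualAnnihilator := by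
    simp [SetLike.le_def, Submodule.mem_dualAnnihilator]
  rw [filter_congr fun φ _ => hmem φ, ← Fintype.card_subtype, card_eq_pow_finrank (K := F),
    ← Subspace.finrank_add_finrank_dualAnnihilator_eq X, Nat.add_sub_cancel_left]

open scoped Classical in
theorem sum_card_filter_le_ker {κ : Type*} (S : Finset κ) (f : κ → Submodule F V) :
    ∑ φ : Module.Dual F V, #{x ∈ S | f x ≤ LinearMap.ker φ} =
      ∑ x ∈ S, Fintype.card F ^ (finrank F V - finrank F (f x)) := by
  simp only [card_filter]
  rw [sum_comm]
  refine sum_congr rfl fun x _ => ?_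
  rw [← card_filter_le_ker, card_filter]

variable {T : Finset (Submodule F V)} {d : ℕ}

open scoped Classical in
theorem sum_card_filter_le_ker_of_finrank_eq (hT : ∀ U ∈ T, finrank F U = d) :
    ∑ φ : Module.Dual F V, #{U ∈ T | U ≤ LinearMap.ker φ} =
      #T * Fintype.card F ^ (finrank F V - d) := by
  calc _ = ∑ U ∈ T, Fintype.card F ^ (finrank F V - finrank F U) := sum_card_filter_le_ker T id
    _ = _ := by rw [sum_congr rfl fun U hU => by rw [hT U hU], sum_const, smul_eq_mul]

open scoped Classical in
theorem sum_sq_card_filter_le_ker_of_finrank_eq (hT : ∀ U ∈ T, finrank F U = d)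
    (hdisj : ∀ U ∈ T, ∀ U' ∈ T, U ≠ U' → U ⊓ U' = ⊥) :
    ∑ φ : Module.Dual F V, #{U ∈ T | U ≤ LinearMap.ker φ} ^ 2 =
      #T * Fintype.card F ^ (finrank F V - d) +
        (#T * #T - #T) * Fintype.card F ^ (finrank F V - 2 * d) := by
  have hsq (φ : Module.Dual F V) : #{U ∈ T | U ≤ LinearMap.ker φ} ^ 2 =
      #{x ∈ T ×ˢ T | x.1 ⊔ x.2 ≤ LinearMap.ker φ} := by
    simp only [sq, ← card_product, ← filter_product, sup_le_iff]
  have hdiag : ∑ x ∈ T.diag, Fintype.card F ^ (finrank F V - finrank F ↥(x.1 ⊔ x.2)) =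
      #T * Fintype.card F ^ (finrank F V - d) := by
    refine (sum_congr rfl fun x hx => ?_).trans (by rw [sum_const, diag_card, smul_eq_mul])
    obtain ⟨hU, hUU⟩ := mem_diag.1 hx
    rw [← hUU, sup_idem, hT _ hU]
  have hoff : ∑ x ∈ T.offDiag, Fintype.card F ^ (finrank F V - finrank F ↥(x.1 ⊔ x.2)) =
      (#T * #T - #T) * Fintype.card F ^ (finrank F V - 2 * d) := by
    refine (sum_congr rfl fun x hx => ?_).trans (by rw [sum_const, offDiag_card, smul_eq_mul])
    obtain ⟨hU, hU', hne⟩ := mem_offDiag.1 hx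
    have := Submodule.finrank_sup_add_finrank_inf_eq x.1 x.2
    rw [hdisj _ hU _ hU' hne, finrank_bot, hT _ hU, hT _ hU'] at this
    rw [show finrank F ↥(x.1 ⊔ x.2) = 2 * d by omega]
  simp only [hsq]
  rw [sum_card_filter_le_ker (T ×ˢ T) fun x => x.1 ⊔ x.2, ← diag_union_offDiag,
    sum_union (disjoint_diag_offDiag _), hdiag, hoff]

end Hyperplanes

theorem dvd_of_pow_sub_one_dvd_pow_sub_one {q a b : ℕ} (hq : 1 < q) (h : q ^ a - 1 ∣ q ^ b - 1) :
    a ∣ b := by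
  have hmod := Nat.mod_eq_zero_of_dvd h
  rw [Nat.pow_sub_one_mod_pow_sub_one] at hmod
  refine Nat.dvd_of_mod_eq_zero (by_contra fun hr => ?_)
  have := Nat.one_lt_pow hr hq
  omega

theorem le_of_dvd_of_lt_add {θ x y : ℕ} (hx : θ ∣ x) (hy : θ ∣ y) (h : y < x + θ) : y ≤ x := by
  obtain ⟨k, rfl⟩ := hx
  obtain ⟨l, rfl⟩ := hy
  have : l < k + 1 := Nat.lt_of_mul_lt_mul_left (a := θ) (by rwa [mul_add_one])
  exact Nat.mul_le_mul_left θ (by omega)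

section Moments

variable {ι : Type*} [Fintype ι] {a : ι → ℕ} {A Q s θ : ℕ}

theorem le_of_sum_eq_of_forall_pos (hcard : Fintype.card ι = A * Q ^ 2)
    (hsum : ∑ i, a i = s * (A * Q)) (hA : 0 < A) (hQ : 0 < Q) (hpos : ∀ i, 0 < a i) : Q ≤ s := by
  refine Nat.le_of_mul_le_mul_right ?_ (Nat.mul_pos hA hQ)
  calc Q * (A * Q) = ∑ _i : ι, 1 := by rw [sum_const, card_univ, hcard, smul_eq_mul]; ring
    _ ≤ ∑ i, a i := sum_le_sum fun i _ => hpos i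
    _ = s * (A * Q) := hsum

theorem mul_lt_add_of_forall_dvd (hsum : ∑ i, a i = s * (A * Q))
    (hsq : ∑ i, a i ^ 2 = s * (A * Q) + (s * s - s) * A) (hA : 0 < A) (hs : 0 < s)
    (hdvd : ∀ i, θ ∣ a i) : θ * Q < s + Q := by
  have hpt (i : ι) : θ * a i ≤ a i ^ 2 := by
    rcases (a i).eq_zero_or_pos with h | h
    · simp [h]
    · rw [sq]; exact Nat.mul_le_mul_right _ (Nat.le_of_dvd h (hdvd i))
  have key : θ * Q * (s * A) ≤ (Q + (s - 1)) * (s * A) :=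
    calc θ * Q * (s * A) = θ * ∑ i, a i := by rw [hsum]; ring
      _ ≤ ∑ i, a i ^ 2 := by rw [mul_sum]; exact sum_le_sum fun i _ => hpt i
      _ = (Q + (s - 1)) * (s * A) := by rw [hsq, ← Nat.mul_sub_one]; ring
  have := Nat.le_of_mul_le_mul_right key (Nat.mul_pos hs hA)
  omega

theorem mul_pred_add_one_eq_of_lt_two_mul (hcard : Fintype.card ι = A * Q ^ 2)
    (hsum : ∑ i, a i = s * (A * Q)) (hsq : ∑ i, a i ^ 2 = s * (A * Q) + (s * s - s) * A)
    (hA : 0 < A) (hs : 0 < s) (hQ : 1 < Q) (hle : ∀ i, a i ≤ s) (hdvd : ∀ i, θ ∣ s - a i)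
    (hlt : s < 2 * θ) : s * (Q - 1) + 1 = θ * Q := by
  have hpt (i : ι) : ((s : ℤ) - a i) * ((s : ℤ) - a i - θ) = 0 := by
    obtain ⟨k, hk⟩ := hdvd i
    have hk2 : k < 2 := Nat.lt_of_mul_lt_mul_left (a := θ) (by omega)
    have hcast : (s : ℤ) - a i = θ * k := by rw [← Nat.cast_sub (hle i), hk]; push_cast; ring
    interval_cases k <;> simp [hcast]
  have hexp : ∑ i, ((s : ℤ) - a i) * ((s : ℤ) - a i - θ) =
      ∑ i, ((s * s - s * θ) - (2 * s - θ) * (a i : ℤ) + (a i : ℤ) ^ 2) :=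
    sum_congr rfl fun i _ => by ring
  rw [sum_eq_zero fun i _ => hpt i, sum_add_distrib, sum_sub_distrib, sum_const, ← mul_sum,
    card_univ, nsmul_eq_mul] at hexp
  have hcard' : (Fintype.card ι : ℤ) = A * Q ^ 2 := by exact_mod_cast hcard
  have hsum' : ∑ i, (a i : ℤ) = s * (A * Q) := by exact_mod_cast hsum
  have hsq' : ∑ i, (a i : ℤ) ^ 2 = s * (A * Q) + (s * s - s) * A := by
    zify [Nat.le_mul_self s] at hsq; exact_mod_cast hsq
  rw [hcard', hsum', hsq'] at hexp
  have hfac : ((A : ℤ) * s * (Q - 1)) * (s * (Q - 1) + 1 - θ * Q) = 0 := by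
    linear_combination -hexp
  have hpos : (A : ℤ) * s * (Q - 1) ≠ 0 := by
    have : (1 : ℤ) < Q := by exact_mod_cast hQ
    positivity
  zify [hQ.le]
  linarith [(mul_eq_zero.1 hfac).resolve_left hpos]

end Moments

theorem tail_bounds_of_moments {ι : Type*} [Fintype ι] (a : ι → ℕ) {q m d₁ d₂ s : ℕ}
    (hq : 1 < q) (hd₁ : 0 < d₁) (hd : d₁ ≤ d₂) (hm : 2 * d₁ ≤ m) (hs : 0 < s)
    (hcard : Fintype.card ι = q ^ m) (hsum : ∑ i, a i = s * q ^ (m - d₁))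
    (hsq : ∑ i, a i ^ 2 = s * q ^ (m - d₁) + (s * s - s) * q ^ (m - 2 * d₁))
    (hle : ∀ i, a i ≤ s) (hdvd : ∀ i, q ^ (d₂ - d₁) ∣ s - a i) :
    (¬ (q ^ (d₂ - d₁) ∣ s) → d₂ < 2 * d₁ → q ^ d₁ + 1 ≤ s) ∧
    (¬ (q ^ (d₂ - d₁) ∣ s) → 2 * d₁ ≤ d₂ →
      (d₁ ∣ d₂ ∧ s = (q ^ d₂ - 1) / (q ^ d₁ - 1)) ∨ 2 * q ^ (d₂ - d₁) < s) ∧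
    (q ^ (d₂ - d₁) ∣ s → d₂ < 2 * d₁ → q ^ d₂ - q ^ d₁ + q ^ (d₂ - d₁) ≤ s) ∧
    (q ^ (d₂ - d₁) ∣ s → 2 * d₁ ≤ d₂ → q ^ d₂ ≤ s) := by
  have hQ : 1 < q ^ d₁ := Nat.one_lt_pow hd₁.ne' hq
  have hA : 0 < q ^ (m - 2 * d₁) := pow_pos (by omega) _
  have hθQ : q ^ (d₂ - d₁) * q ^ d₁ = q ^ d₂ := by rw [← pow_add, Nat.sub_add_cancel hd]
  have hmd₁ : q ^ (m - d₁) = q ^ (m - 2 * d₁) * q ^ d₁ := by rw [← pow_add]; congr 1; omega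
  rw [hmd₁] at hsum hsq
  have hcard' : Fintype.card ι = q ^ (m - 2 * d₁) * (q ^ d₁) ^ 2 := by
    rw [hcard, ← pow_mul, ← pow_add]; congr 1; omega
  have hdvd_a (hθs : q ^ (d₂ - d₁) ∣ s) (i : ι) : q ^ (d₂ - d₁) ∣ a i := by
    simpa [Nat.sub_sub_self (hle i)] using Nat.dvd_sub hθs (hdvd i)
  refine ⟨fun hθs hlt => ?_, fun hθs _ => ?_, fun hθs hlt => ?_, fun hθs hle₂ => ?_⟩
  · have hpos (i : ι) : 0 < a i :=
      Nat.pos_of_ne_zero fun h0 => hθs (by simpa [h0] using hdvd i)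
    have hθQ' : q ^ (d₂ - d₁) ∣ q ^ d₁ := pow_dvd_pow q (by omega)
    rcases (le_of_sum_eq_of_forall_pos hcard' hsum hA (by omega) hpos).lt_or_eq with h | rfl
    · omega
    · exact absurd hθQ' hθs
  · refine (lt_or_ge (2 * q ^ (d₂ - d₁)) s).elim Or.inr fun h₂ => Or.inl ?_
    have hlt : s < 2 * q ^ (d₂ - d₁) := h₂.lt_of_ne fun h => hθs (h ▸ dvd_mul_left _ 2)
    have heq := mul_pred_add_one_eq_of_lt_two_mul hcard' hsum hsq hA hs hQ hle hdvd hlt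
    rw [hθQ] at heq
    have hs' : q ^ d₂ - 1 = (q ^ d₁ - 1) * s := by rw [← heq]; ring_nf; omega
    exact ⟨dvd_of_pow_sub_one_dvd_pow_sub_one hq (Dvd.intro s hs'.symm),
      (Nat.div_eq_of_eq_mul_right (by omega) hs').symm⟩
  · have h := mul_lt_add_of_forall_dvd hsum hsq hA hs (hdvd_a hθs)
    have hθQ' : q ^ (d₂ - d₁) ∣ q ^ d₁ := pow_dvd_pow q (by omega)
    rw [hθQ] at h
    refine le_of_dvd_of_lt_add hθs ?_ (by omega)
    exact Nat.dvd_add (Nat.dvd_sub (hθQ ▸ dvd_mul_right _ _) hθQ') dvd_rfl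
  · have h := mul_lt_add_of_forall_dvd hsum hsq hA hs (hdvd_a hθs)
    have hQθ : q ^ d₁ ≤ q ^ (d₂ - d₁) := Nat.pow_le_pow_right (by omega) (by omega)
    rw [← hθQ]
    exact le_of_dvd_of_lt_add hθs (dvd_mul_right _ _) (by omega)

theorem length_of_tail_general (F : Type) [Field F] [Fintype F] (q n : ℕ)
    (hq : Fintype.card F = q)
    (P : Finset (Submodule F (Fin n → F)))
    (hbot : ⊥ ∉ P)
    (hcover : ∀ v : Fin n → F, v ≠ 0 → ∃! U, U ∈ P ∧ v ∈ U)
    (d₁ d₂ n₁ : ℕ)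
    (hd₁mem : ∃ U ∈ P, Module.finrank F U = d₁)
    (hd₂mem : ∃ U ∈ P, Module.finrank F U = d₂)
    (hd₁d₂ : d₁ < d₂)
    (hd₂snd : ∀ U ∈ P, Module.finrank F U = d₁ ∨ d₂ ≤ Module.finrank F U)
    (hn₁ : n₁ = (P.filter (fun (U : Submodule F (Fin n → F)) => Module.finrank F ↥U = d₁)).card) :
    (¬ (q ^ (d₂ - d₁) ∣ n₁) → d₂ < 2 * d₁ → q ^ d₁ + 1 ≤ n₁) ∧
    (¬ (q ^ (d₂ - d₁) ∣ n₁) → 2 * d₁ ≤ d₂ →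
      (d₁ ∣ d₂ ∧ n₁ = (q ^ d₂ - 1) / (q ^ d₁ - 1)) ∨ 2 * q ^ (d₂ - d₁) < n₁) ∧
    (q ^ (d₂ - d₁) ∣ n₁ → d₂ < 2 * d₁ → q ^ d₂ - q ^ d₁ + q ^ (d₂ - d₁) ≤ n₁) ∧
    (q ^ (d₂ - d₁) ∣ n₁ → 2 * d₁ ≤ d₂ → q ^ d₂ ≤ n₁) := by
  classical
  subst hq hn₁
  obtain ⟨U₁, hU₁, hU₁d⟩ := hd₁mem
  obtain ⟨U₂, hU₂, hU₂d⟩ := hd₂mem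
  have hd₁ : 0 < d₁ := hU₁d ▸ Submodule.one_le_finrank_iff.2 fun h => hbot (h ▸ hU₁)
  have hn : d₁ + d₂ ≤ n := by
    have hne : U₁ ≠ U₂ := by rintro rfl; omega
    simpa [hU₁d, hU₂d] using Submodule.finrank_add_finrank_le_of_disjoint
      (disjoint_iff.2 (inf_eq_bot_of_existsUnique_mem hcover hU₁ hU₂ hne))
  have : Finite (Module.Dual F (Fin n → F)) := Module.finite_of_finite F
  let _ : Fintype (Module.Dual F (Fin n → F)) := Fintype.ofFinite _
  set Tail := P.filter fun U : Submodule F (Fin n → F) => finrank F U = d₁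
  have hTail : ∀ U ∈ Tail, finrank F ↥U = d₁ := fun U hU => (mem_filter.1 hU).2
  have hdisj : ∀ U ∈ Tail, ∀ U' ∈ Tail, U ≠ U' → U ⊓ U' = ⊥ := fun U hU U' hU' =>
    inf_eq_bot_of_existsUnique_mem hcover (mem_filter.1 hU).1 (mem_filter.1 hU').1
  refine tail_bounds_of_moments (fun φ => #{U ∈ Tail | U ≤ LinearMap.ker φ}) Fintype.one_lt_card
    hd₁ hd₁d₂.le (show 2 * d₁ ≤ n by omega) (card_pos.2 ⟨U₁, mem_filter.2 ⟨hU₁, hU₁d⟩⟩) ?_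
    (by simpa only [finrank_fin_fun] using sum_card_filter_le_ker_of_finrank_eq hTail)
    (by simpa only [finrank_fin_fun] using sum_sq_card_filter_le_ker_of_finrank_eq hTail hdisj)
    (fun φ => card_filter_le _ _) fun φ => ?_
  · rw [card_eq_pow_finrank (K := F), Subspace.dual_finrank_eq, finrank_fin_fun]
  · rw [← card_filter_add_card_filter_not (s := Tail) (· ≤ LinearMap.ker φ),
      Nat.add_sub_cancel_left, filter_filter]
    exact pow_dvd_card_filter_not_le_ker hcover hd₁ hd₁d₂.le (by rw [finrank_fin_fun]; omega)
      hd₂snd φ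

/-- Theorem 1 in [heden2009length] on the length of the tail of a vector space
partition. -/
theorem length_of_tail (F : Type) [Field F] [Fintype F] (q n : ℕ)
    (hq : Fintype.card F = q)
    (P : Finset (Submodule F (Fin n → F)))
    (hbot : ⊥ ∉ P)
    (hcover : ∀ v : Fin n → F, v ≠ 0 → ∃! U, U ∈ P ∧ v ∈ U)
    (d₁ d₂ n₁ : ℕ)
    (hd₁mem : ∃ U ∈ P, Module.finrank F U = d₁)
    (hd₁min : ∀ U ∈ P, d₁ ≤ Module.finrank F U)
    (hd₂mem : ∃ U ∈ P, Module.finrank F U = d₂)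
    (hd₁d₂ : d₁ < d₂)
    (hd₂snd : ∀ U ∈ P, Module.finrank F U = d₁ ∨ d₂ ≤ Module.finrank F U)
    (hn₁ : n₁ = (P.filter (fun (U : Submodule F (Fin n → F)) => Module.finrank F ↥U = d₁)).card) :
    (¬ (q ^ (d₂ - d₁) ∣ n₁) → d₂ < 2 * d₁ → q ^ d₁ + 1 ≤ n₁) ∧
    (¬ (q ^ (d₂ - d₁) ∣ n₁) → 2 * d₁ ≤ d₂ →
      (d₁ ∣ d₂ ∧ n₁ = (q ^ d₂ - 1) / (q ^ d₁ - 1)) ∨ 2 * q ^ (d₂ - d₁) < n₁) ∧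
    (q ^ (d₂ - d₁) ∣ n₁ → d₂ < 2 * d₁ → q ^ d₂ - q ^ d₁ + q ^ (d₂ - d₁) ≤ n₁) ∧
    (q ^ (d₂ - d₁) ∣ n₁ → 2 * d₁ ≤ d₂ → q ^ d₂ ≤ n₁) :=
  length_of_tail_general F q n hq P hbot hcover d₁ d₂ n₁ hd₁mem hd₂mem hd₁d₂ hd₂snd hn₁
end
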